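/- arXiv:1109.6490 — 6 statements merged into one kernel-verified Lean document; each statement's English description precedes it below -/
import Mathlib

section
/- For a triangulation of a closed d-dimensional combinatorial manifold X, the h-vector defined by \sum_{i=0}^{d+1} h_i x^{d+1-i} = \sum_{j=0}^{d+1} f_{j-1}(x-1)^{d+1-j} (with f_{-1}=1) satisfies the generalized Dehn–Sommerville relations h_{d+1-i} - h_i = (-1)^i \binom{d+1}{i} (\chi(X) - \chi(S^d)) for all 0 \le i \le d+1. -/
/-!
Write `Φ(a, b) = ∑_{τ ∈ Δ ∪ {∅}} a^|τ| b^(n-|τ|)` (`n = d + 1`) for the homogenized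
`f`-polynomial, so that the `h`-polynomial is `Φ(1, X - 1)` and its reversal is `Φ(X, 1 - X)`.
Expanding `(a + b)^|τ|` over the subsets `σ ⊆ τ` and swapping the sums gives
`Φ(-(a + b), b) = ∑_σ a^|σ| b^(n-|σ|) ∑_{τ ⊇ σ} (-1)^|τ|`. The star of a face `σ` is the join of
`σ` with its link, so the link condition says that its alternating sum is `(-1)^n`; for `σ = ∅`
it is `1 - χ`. Hence `Φ(-(a + b), b) = (-1)^n Φ(a, b) + (1 - χ - (-1)^n) b^n`, and at
`a = -1`, `b = 1 - X` this says that the `h`-polynomial and its reversal differ by a multiple of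
`(1 - X)^n`; comparing coefficients gives the relations.
-/

open Finset Polynomial

section

variable {R : Type*} [CommRing R] {V : Type*}

lemma reflect_sum {ι : Type*} (s : Finset ι) (p : ι → R[X]) (N : ℕ) :
    reflect N (∑ i ∈ s, p i) = ∑ i ∈ s, reflect N (p i) :=
  map_sum (AddMonoidHom.mk' (reflect N) fun f g => reflect_add f g N) p s

lemma reflect_X_sub_one_pow (m k : ℕ) :
    reflect (m + k) ((X - 1 : R[X]) ^ m) = X ^ k * (1 - X) ^ m := by
  induction m with
  | zero => simp [reflect_one]
  | succ m ih =>
    have hdeg : ((X - 1 : R[X]) ^ m).natDegree ≤ m + k := by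
      compute_degree
      omega
    rw [show m + 1 + k = (m + k) + 1 by omega, pow_succ, reflect_mul _ _ hdeg (by compute_degree),
      ih, reflect_sub, reflect_one_X, reflect_one, pow_one, pow_succ, mul_assoc]

lemma coeff_one_sub_X_pow (n k : ℕ) : ((1 - X : R[X]) ^ n).coeff k = (-1) ^ k * n.choose k := by
  have : (1 - X : R[X]) ^ n = C ((-1) ^ n) * (X + C (-1)) ^ n := by
    rw [C_pow, ← mul_pow, C_neg, C_1]
    ring
  rw [this, coeff_C_mul, coeff_X_add_C_pow]
  rcases le_or_gt k n with hkn | hnk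
  · rw [← mul_assoc, ← pow_add, show n + (n - k) = k + 2 * (n - k) by omega, pow_add, pow_mul]
    simp
  · simp [Nat.choose_eq_zero_of_lt hnk]

lemma coeff_sum_C_mul_X_pow_sub (c : ℕ → R) {n k : ℕ} (hk : k ≤ n) :
    (∑ i ∈ range (n + 1), C (c i) * X ^ (n - i)).coeff k = c (n - k) := by
  rw [finsetSum_coeff, sum_eq_single (n - k)]
  · rw [coeff_C_mul_X_pow, if_pos (by omega)]
  · intro i hi hik
    rw [coeff_C_mul_X_pow, if_neg (by rw [mem_range] at hi; omega)]
  · exact fun hk' => absurd (mem_range.2 (by omega)) hk'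

lemma neg_one_pow_card_sub_one {t : Finset V} (ht : t.Nonempty) :
    (-1 : ℤ) ^ (#t - 1) = -(-1) ^ #t := by
  obtain ⟨k, hk⟩ := Nat.exists_eq_succ_of_ne_zero ht.card_pos.ne'
  rw [hk, Nat.succ_sub_one, pow_succ]
  ring

lemma sum_ssuperset_eq_sum_link [DecidableEq V] {M : Type*} [AddCommMonoid M]
    {Δ : Finset (Finset V)}
    (hne : ∀ s ∈ Δ, s.Nonempty)
    (hdown : ∀ s ∈ Δ, ∀ t : Finset V, t ⊆ s → t.Nonempty → t ∈ Δ)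
    (σ : Finset V) (F : Finset V → M) :
    ∑ τ ∈ Δ with σ ⊂ τ, F τ = ∑ t ∈ Δ with Disjoint σ t ∧ σ ∪ t ∈ Δ, F (σ ∪ t) := by
  symm
  refine sum_nbij' (σ ∪ ·) (· \ σ) ?_ ?_ ?_ ?_ fun _ _ => rfl
  · simp only [mem_filter]
    rintro t ⟨ht, hdisj, hunion⟩
    obtain ⟨x, hx⟩ := hne t ht
    exact ⟨hunion, ssubset_iff_of_subset subset_union_left |>.2
      ⟨x, mem_union_right _ hx, disjoint_right.1 hdisj hx⟩⟩
  · simp only [mem_filter]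
    rintro τ ⟨hτ, hστ⟩
    refine ⟨hdown τ hτ _ sdiff_subset (sdiff_nonempty.2 hστ.2), disjoint_sdiff, ?_⟩
    rwa [union_sdiff_of_subset hστ.1]
  · intro t ht
    exact union_sdiff_cancel_left (mem_filter.1 ht).2.1
  · intro τ hτ
    exact union_sdiff_of_subset (mem_filter.1 hτ).2.1

lemma sum_superset_neg_one_pow [DecidableEq V] {d : ℕ} {Δ : Finset (Finset V)}
    (hne : ∀ s ∈ Δ, s.Nonempty)
    (hdown : ∀ s ∈ Δ, ∀ t : Finset V, t ⊆ s → t.Nonempty → t ∈ Δ)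
    (hdim : ∀ s ∈ Δ, #s ≤ d + 1)
    (hlink : ∀ s ∈ Δ, #s ≤ d →
      (∑ t ∈ Δ.filter (fun t => Disjoint s t ∧ s ∪ t ∈ Δ), (-1 : ℤ) ^ (#t - 1))
        = 1 + (-1) ^ (d - #s))
    {σ : Finset V} (hσ : σ ∈ Δ) :
    ∑ τ ∈ Δ with σ ⊆ τ, (-1 : ℤ) ^ #τ = (-1) ^ (d + 1) := by
  rcases (hdim σ hσ).lt_or_eq with hlt | htop
  · have hsplit : {τ ∈ Δ | σ ⊆ τ} = insert σ {τ ∈ Δ | σ ⊂ τ} := by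
      ext τ
      simp only [mem_filter, mem_insert, subset_iff_ssubset_or_eq]
      constructor
      · rintro ⟨hτ, hst | rfl⟩ <;> tauto
      · rintro (rfl | ⟨hτ, hst⟩) <;> tauto
    have hunion : ∀ t ∈ Δ.filter (fun t => Disjoint σ t ∧ σ ∪ t ∈ Δ),
        (-1 : ℤ) ^ #(σ ∪ t) = -(-1) ^ #σ * (-1) ^ (#t - 1) := by
      intro t ht
      obtain ⟨ht, hdisj, -⟩ := mem_filter.1 ht
      rw [card_union_of_disjoint hdisj, neg_one_pow_card_sub_one (hne t ht), pow_add]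
      ring
    have hsign : (-1 : ℤ) ^ #σ * (-1) ^ (d - #σ) = (-1) ^ d := by
      rw [← pow_add, Nat.add_sub_cancel' (by omega)]
    rw [hsplit, sum_insert (by simp), sum_ssuperset_eq_sum_link hne hdown, sum_congr rfl hunion,
      ← mul_sum, hlink σ hσ (by omega)]
    linear_combination -hsign
  · have hself : {τ ∈ Δ | σ ⊆ τ} = {σ} := by
      ext τ
      simp only [mem_filter, mem_singleton]
      constructor
      · rintro ⟨hτ, hστ⟩
        exact (eq_of_subset_of_card_le hστ (htop ▸ hdim τ hτ)).symm
      · rintro rfl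
        exact ⟨hσ, subset_rfl⟩
    rw [hself, sum_singleton, htop]

/-- The form `Φ` of the header: the term `bⁿ` comes from the empty face. -/
def homogenizedFPoly (Δ : Finset (Finset V)) (n : ℕ) (a b : R) : R :=
  b ^ n + ∑ τ ∈ Δ, a ^ #τ * b ^ (n - #τ)

lemma homogenizedFPoly_neg_neg {Δ : Finset (Finset V)} {n : ℕ} (hdim : ∀ τ ∈ Δ, #τ ≤ n) (a b : R) :
    homogenizedFPoly Δ n (-a) (-b) = (-1) ^ n * homogenizedFPoly Δ n a b := by
  rw [homogenizedFPoly, homogenizedFPoly, mul_add, mul_sum, neg_pow b]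
  congr 1
  refine sum_congr rfl fun τ hτ => ?_
  rw [neg_pow a, neg_pow b, ← Nat.add_sub_cancel' (hdim τ hτ), pow_add, Nat.add_sub_cancel_left]
  ring

lemma homogenizedFPoly_neg_add [DecidableEq V] {Δ : Finset (Finset V)} {n : ℕ}
    (hne : ∀ s ∈ Δ, s.Nonempty)
    (hdown : ∀ s ∈ Δ, ∀ t : Finset V, t ⊆ s → t.Nonempty → t ∈ Δ)
    (hdim : ∀ τ ∈ Δ, #τ ≤ n)
    (hstar : ∀ σ ∈ Δ, ∑ τ ∈ Δ with σ ⊆ τ, (-1 : ℤ) ^ #τ = (-1) ^ n) (a b : R) :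
    homogenizedFPoly Δ n (-(a + b)) b
      = (-1) ^ n * homogenizedFPoly Δ n a b
        + ((1 + ∑ τ ∈ Δ, (-1 : ℤ) ^ #τ - (-1) ^ n : ℤ) : R) * b ^ n := by
  have hexpand : ∀ τ ∈ Δ, (-(a + b)) ^ #τ * b ^ (n - #τ)
      = ∑ σ ∈ τ.powerset, (-1 : R) ^ #τ * (a ^ #σ * b ^ (n - #σ)) := by
    intro τ hτ
    rw [neg_pow, ← sum_pow_mul_eq_add_pow, mul_assoc, sum_mul, mul_sum]
    refine sum_congr rfl fun σ hσ => ?_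
    have := card_le_card (mem_powerset.1 hσ)
    have := hdim τ hτ
    rw [show n - #σ = (#τ - #σ) + (n - #τ) by omega, pow_add]
    ring
  have hswap : ∀ G : Finset V → Finset V → R, ∑ τ ∈ Δ, ∑ σ ∈ τ.powerset, G τ σ
      = ∑ σ ∈ insert ∅ Δ, ∑ τ ∈ Δ with σ ⊆ τ, G τ σ := by
    intro G
    refine sum_comm' fun τ σ => ?_
    simp only [mem_powerset, mem_filter, mem_insert]
    constructor
    · rintro ⟨hτ, hστ⟩
      refine ⟨⟨hτ, hστ⟩, σ.eq_empty_or_nonempty.imp_right fun hσ => hdown τ hτ σ hστ hσ⟩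
    · exact fun h => h.1
  have hinner : ∀ σ : Finset V, ∑ τ ∈ Δ with σ ⊆ τ, (-1 : R) ^ #τ * (a ^ #σ * b ^ (n - #σ))
      = ((∑ τ ∈ Δ with σ ⊆ τ, (-1 : ℤ) ^ #τ : ℤ) : R) * (a ^ #σ * b ^ (n - #σ)) := by
    intro σ
    push_cast
    rw [sum_mul]
  have hstar' : ∀ σ ∈ Δ, ((∑ τ ∈ Δ with σ ⊆ τ, (-1 : ℤ) ^ #τ : ℤ) : R) * (a ^ #σ * b ^ (n - #σ))
      = (-1) ^ n * (a ^ #σ * b ^ (n - #σ)) := fun σ hσ => by rw [hstar σ hσ]; push_cast; rfl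
  rw [homogenizedFPoly, sum_congr rfl hexpand, hswap, sum_congr rfl fun σ _ => hinner σ,
    sum_insert fun h => (hne ∅ h).ne_empty rfl, sum_congr rfl hstar',
    filter_true_of_mem fun τ _ => empty_subset τ]
  simp only [homogenizedFPoly, card_empty, pow_zero, Nat.sub_zero]
  push_cast
  rw [mul_add, mul_sum]
  ring

lemma reflect_homogenizedFPoly {Δ : Finset (Finset V)} {n : ℕ} (hdim : ∀ τ ∈ Δ, #τ ≤ n) :
    reflect n (homogenizedFPoly Δ n 1 (X - 1 : R[X])) = homogenizedFPoly Δ n X (1 - X) := by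
  have hface : ∀ τ ∈ Δ, reflect n ((X - 1 : R[X]) ^ (n - #τ)) = X ^ #τ * (1 - X) ^ (n - #τ) := by
    intro τ hτ
    rw [← reflect_X_sub_one_pow, Nat.sub_add_cancel (hdim τ hτ)]
  have hempty := reflect_X_sub_one_pow (R := R) n 0
  rw [add_zero, pow_zero, one_mul] at hempty
  simp only [homogenizedFPoly, one_pow, one_mul, reflect_add, reflect_sum, sum_congr rfl hface,
    hempty]

lemma reflect_homogenizedFPoly_one_X_sub_one [DecidableEq V] {Δ : Finset (Finset V)} {n : ℕ}
    (hne : ∀ s ∈ Δ, s.Nonempty)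
    (hdown : ∀ s ∈ Δ, ∀ t : Finset V, t ⊆ s → t.Nonempty → t ∈ Δ)
    (hdim : ∀ τ ∈ Δ, #τ ≤ n)
    (hstar : ∀ σ ∈ Δ, ∑ τ ∈ Δ with σ ⊆ τ, (-1 : ℤ) ^ #τ = (-1) ^ n) :
    reflect n (homogenizedFPoly Δ n 1 (X - 1 : R[X])) = homogenizedFPoly Δ n 1 (X - 1)
      + ((1 + ∑ τ ∈ Δ, (-1 : ℤ) ^ #τ - (-1) ^ n : ℤ) : R[X]) * (1 - X) ^ n := by
  have hneg_add := homogenizedFPoly_neg_add hne hdown hdim hstar (-1 : R[X]) (1 - X)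
  have hneg_neg := homogenizedFPoly_neg_neg hdim (1 : R[X]) (X - 1)
  rw [show -((-1 : R[X]) + (1 - X)) = X by ring] at hneg_add
  rw [show (-(X - 1) : R[X]) = 1 - X by ring] at hneg_neg
  rw [reflect_homogenizedFPoly hdim, hneg_add, hneg_neg, ← mul_assoc, ← mul_pow]
  simp

lemma sum_range_smul_eq_add_sum_faces {M : Type*} [AddCommGroup M] {d : ℕ}
    {Δ : Finset (Finset V)} (hne : ∀ s ∈ Δ, s.Nonempty) (hdim : ∀ s ∈ Δ, #s ≤ d + 1)
    {f : ℕ → ℤ} (hf : ∀ j : ℕ, f j = if j = 0 then 1 else (#{s ∈ Δ | #s = j} : ℤ))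
    (g : ℕ → M) :
    ∑ j ∈ range (d + 2), f j • g j = g 0 + ∑ τ ∈ Δ, g #τ := by
  have hf' : ∀ j, f j = (if j = 0 then 1 else 0) + (#{s ∈ Δ | #s = j} : ℤ) := by
    intro j
    rcases eq_or_ne j 0 with rfl | hj
    · simp [hf, filter_eq_empty_iff.2 fun s hs => (hne s hs).card_pos.ne']
    · simp [hf, hj]
  have hfibers : ∑ j ∈ range (d + 2), (#{s ∈ Δ | #s = j} : ℤ) • g j = ∑ τ ∈ Δ, g #τ := by
    rw [← sum_fiberwise_of_maps_to (g := card)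
      fun τ hτ => mem_range.2 (Nat.lt_succ_of_le (hdim τ hτ))]
    refine sum_congr rfl fun j _ => ?_
    rw [sum_congr rfl fun τ hτ => by rw [(mem_filter.1 hτ).2], sum_const, natCast_zsmul]
  simp only [hf', add_smul, sum_add_distrib, hfibers, ite_smul, one_smul, zero_smul, sum_ite_eq',
    mem_range, Nat.zero_lt_succ, if_true]

end

theorem generalized_dehn_sommerville_general
    {V : Type*} [DecidableEq V] (d : ℕ)
    (Δ : Finset (Finset V))
    (hne : ∀ s ∈ Δ, s.Nonempty)
    (hdown : ∀ s ∈ Δ, ∀ t : Finset V, t ⊆ s → t.Nonempty → t ∈ Δ)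
    (hdim : ∀ s ∈ Δ, s.card ≤ d + 1)
    -- each link has the Euler characteristic of a sphere of the right dimension
    (hlink : ∀ s ∈ Δ, s.card ≤ d →
      (∑ t ∈ Δ.filter (fun t => Disjoint s t ∧ s ∪ t ∈ Δ), (-1 : ℤ) ^ (t.card - 1))
        = 1 + (-1) ^ (d - s.card))
    (f : ℕ → ℤ)
    (hf : ∀ j : ℕ, f j = if j = 0 then 1 else ((Δ.filter (fun s => s.card = j)).card : ℤ))
    (χ : ℤ)
    (hχ : χ = ∑ s ∈ Δ, (-1 : ℤ) ^ (s.card - 1))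
    (h : ℕ → ℤ)
    (hh : ∑ i ∈ Finset.range (d + 2), C (h i) * X ^ (d + 1 - i)
        = ∑ j ∈ Finset.range (d + 2), C (f j) * (X - 1 : ℤ[X]) ^ (d + 1 - j)) :
    ∀ i ≤ d + 1,
      h (d + 1 - i) - h i
        = (-1 : ℤ) ^ i * ((d + 1).choose i : ℤ) * (χ - (1 + (-1 : ℤ) ^ d)) := by
  intro i hi
  have hχ' : ∑ s ∈ Δ, (-1 : ℤ) ^ #s = -χ := by
    rw [hχ, ← sum_neg_distrib]
    exact sum_congr rfl fun s hs => by rw [neg_one_pow_card_sub_one (hne s hs), neg_neg]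
  have hhf : ∑ i ∈ range (d + 2), C (h i) * X ^ (d + 1 - i)
      = homogenizedFPoly Δ (d + 1) 1 (X - 1 : ℤ[X]) := by
    rw [hh]
    simp only [← smul_eq_C_mul, sum_range_smul_eq_add_sum_faces hne hdim hf, homogenizedFPoly,
      one_pow, one_mul, Nat.sub_zero]
  have hcoeff := congrArg (coeff · i) (reflect_homogenizedFPoly_one_X_sub_one hne hdown hdim
    (fun σ hσ => sum_superset_neg_one_pow hne hdown hdim hlink hσ) (R := ℤ))
  simp only [← hhf, coeff_add, coeff_reflect, revAt_le hi, coeff_intCast_mul, coeff_one_sub_X_pow,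
    coeff_sum_C_mul_X_pow_sub h hi, coeff_sum_C_mul_X_pow_sub h (Nat.sub_le _ _),
    Nat.sub_sub_self hi, hχ', Int.cast_id] at hcoeff
  linear_combination -hcoeff + (-1) ^ i * ((d + 1).choose i : ℤ) * pow_succ (-1 : ℤ) d

/-- **Generalized Dehn–Sommerville relations** (Klee).
`Δ` is a simplicial complex (a downward-closed family of nonempty finite sets of
vertices) triangulating a closed `d`-dimensional manifold `X`; the manifold
condition is expressed combinatorially: `Δ` is pure of dimension `d` and the
link of every face `s` has the Euler characteristic of a sphere of dimension
`d - card s`.  `f j` denotes the number of faces of dimension `j - 1` (so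
`f 0 = f₋₁ = 1`), `χ` is the (topological = combinatorial) Euler characteristic
of `X`, and the `h`-vector is defined by the polynomial identity
`∑ i, h i * x^(d+1-i) = ∑ j, f j * (x-1)^(d+1-j)`.  Then
`h (d+1-i) - h i = (-1)^i * (d+1).choose i * (χ X - χ (S^d))` for `0 ≤ i ≤ d+1`. -/
theorem generalized_dehn_sommerville
    {V : Type*} [Fintype V] [DecidableEq V] (d : ℕ)
    (Δ : Finset (Finset V))
    (hne : ∀ s ∈ Δ, s.Nonempty)
    (hdown : ∀ s ∈ Δ, ∀ t : Finset V, t ⊆ s → t.Nonempty → t ∈ Δ)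
    (hdim : ∀ s ∈ Δ, s.card ≤ d + 1)
    (hpure : ∀ s ∈ Δ, ∃ m ∈ Δ, s ⊆ m ∧ m.card = d + 1)
    -- each link has the Euler characteristic of a sphere of the right dimension
    (hlink : ∀ s ∈ Δ, s.card ≤ d →
      (∑ t ∈ Δ.filter (fun t => Disjoint s t ∧ s ∪ t ∈ Δ), (-1 : ℤ) ^ (t.card - 1))
        = 1 + (-1) ^ (d - s.card))
    (f : ℕ → ℤ)
    (hf : ∀ j : ℕ, f j = if j = 0 then 1 else ((Δ.filter (fun s => s.card = j)).card : ℤ))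
    (χ : ℤ)
    (hχ : χ = ∑ s ∈ Δ, (-1 : ℤ) ^ (s.card - 1))
    (h : ℕ → ℤ)
    (hh : ∑ i ∈ Finset.range (d + 2), C (h i) * X ^ (d + 1 - i)
        = ∑ j ∈ Finset.range (d + 2), C (f j) * (X - 1 : ℤ[X]) ^ (d + 1 - j)) :
    ∀ i ≤ d + 1,
      h (d + 1 - i) - h i
        = (-1 : ℤ) ^ i * ((d + 1).choose i : ℤ) * (χ - (1 + (-1 : ℤ) ^ d)) :=
  generalized_dehn_sommerville_general d Δ hne hdown hdim hlink f hf χ hχ h hh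
end

section
/- Suppose a triangulation of the quaternionic projective plane HP^2 (dimension 8, Euler characteristic 3) has 15 vertices and contains all possible faces of dimension at most 4, i.e. f_k = binom(15, k+1) for 0 \le k \le 4. Then the generalized Dehn–Sommerville equations force f_5 = 4515, f_6 = 4230, f_7 = 2205, f_8 = 490. -/
open Polynomial Finset

/-!
Comparing coefficients of `X ^ (n - k)` in the defining identity, and in the same identity
composed with `X + 1`, inverts the `f ↔ h` change of basis in both directions:
`h k = ∑ (-1) ^ (k - i) (n - i).choose (k - i) f i` and `f k = ∑ (n - i).choose (k - i) h i`.
The complete 4-skeleton fixes `h 0, …, h 4`, Dehn–Sommerville reflects them to `h 5, …, h 9`,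
and the inverse transform then yields `f 6, …, f 9`.
-/

section HVector

variable {R : Type*} [CommRing R]

def IsHVectorOf (n : ℕ) (f h : ℕ → R) : Prop :=
  ∑ i ∈ range (n + 1), C (h i) * X ^ (n - i)
    = ∑ j ∈ range (n + 1), C (f j) * (X - 1 : R[X]) ^ (n - j)

theorem coeff_sum_C_mul_X_add_C_pow (a : ℕ → R) (r : R) {n k : ℕ} (hk : k ≤ n) :
    (∑ i ∈ range (n + 1), C (a i) * (X + C r) ^ (n - i)).coeff (n - k)
      = ∑ i ∈ range (k + 1), a i * r ^ (k - i) * (n - i).choose (k - i) := by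
  rw [finsetSum_coeff, ← sum_subset (range_subset_range.2 (by omega : k + 1 ≤ n + 1))]
  · refine sum_congr rfl fun i hi => ?_
    have hik : i ≤ k := Nat.lt_succ_iff.1 (mem_range.1 hi)
    rw [coeff_C_mul, coeff_X_add_C_pow, mul_assoc,
      Nat.choose_symm_of_eq_add (by omega : n - i = (n - k) + (k - i)),
      show n - i - (n - k) = k - i by omega]
  · intro i hi hik
    have : n - i < n - k := by simp only [mem_range] at hi hik; omega
    rw [coeff_C_mul, coeff_X_add_C_pow, Nat.choose_eq_zero_of_lt this, Nat.cast_zero, mul_zero,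
      mul_zero]

theorem coeff_sum_C_mul_X_pow (a : ℕ → R) {n k : ℕ} (hk : k ≤ n) :
    (∑ i ∈ range (n + 1), C (a i) * X ^ (n - i)).coeff (n - k) = a k := by
  have := coeff_sum_C_mul_X_add_C_pow a 0 hk
  simp only [map_zero, add_zero] at this
  rw [this, sum_range_succ, Nat.sub_self, pow_zero, Nat.choose_zero_right, Nat.cast_one,
    mul_one, mul_one, add_eq_right]
  exact sum_eq_zero fun i hi => by
    rw [zero_pow (by simp only [mem_range] at hi; omega), mul_zero, zero_mul]

variable {n k : ℕ} {f h : ℕ → R}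

theorem IsHVectorOf.h_eq (H : IsHVectorOf n f h) (hk : k ≤ n) :
    h k = ∑ i ∈ range (k + 1), f i * (-1) ^ (k - i) * (n - i).choose (k - i) := by
  have hX : (X - 1 : R[X]) = X + C (-1) := by rw [C_neg, C_1, sub_eq_add_neg]
  have := congrArg (coeff · (n - k)) H
  simp only [hX] at this
  rwa [coeff_sum_C_mul_X_pow _ hk, coeff_sum_C_mul_X_add_C_pow _ _ hk] at this

theorem IsHVectorOf.f_eq (H : IsHVectorOf n f h) (hk : k ≤ n) :
    f k = ∑ i ∈ range (k + 1), h i * (n - i).choose (k - i) := by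
  have := congrArg (fun p => (p.comp (X + C 1)).coeff (n - k)) H
  simp only [Polynomial.sum_comp, mul_comp, C_comp, pow_comp, X_comp, sub_comp, one_comp, C_1,
    add_sub_cancel_right] at this
  rw [← C_1, coeff_sum_C_mul_X_pow _ hk, coeff_sum_C_mul_X_add_C_pow _ _ hk] at this
  simpa only [one_pow, mul_one] using this.symm

end HVector

/-- For a 15-vertex triangulation of `HP²` (a closed 8-manifold with Euler
characteristic 3) containing all faces of dimension at most 4, i.e. with
`f (k+1) = binom(15,k+1)` for `0 ≤ k ≤ 4` (here `f j` counts faces of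
dimension `j-1` and `f 0 = f₋₁ = 1`), the generalized Dehn–Sommerville
equations `h (9-i) - h i = (-1)^i * binom(9,i) * (χ - 2)` with `χ = 3`,
where `∑ i, h i * x^(9-i) = ∑ j, f j * (x-1)^(9-j)`, force
`f_5 = 4515`, `f_6 = 4230`, `f_7 = 2205`, `f_8 = 490`. -/
theorem hp2_face_numbers (f h : ℕ → ℤ)
    (hf : ∀ j ≤ 5, f j = (Nat.choose 15 j : ℤ))
    (hpoly : ∑ i ∈ Finset.range 10, C (h i) * X ^ (9 - i)
        = ∑ j ∈ Finset.range 10, C (f j) * (X - 1 : ℤ[X]) ^ (9 - j))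
    (hDS : ∀ i ≤ 9, h (9 - i) - h i
        = (-1 : ℤ) ^ i * (Nat.choose 9 i : ℤ) * ((3 : ℤ) - 2)) :
    f 6 = 4515 ∧ f 7 = 4230 ∧ f 8 = 2205 ∧ f 9 = 490 := by
  have H : IsHVectorOf 9 f h := hpoly
  have h_low : h 0 = 1 ∧ h 1 = 6 ∧ h 2 = 21 ∧ h 3 = 56 ∧ h 4 = 126 := by
    refine ⟨?_, ?_, ?_, ?_, ?_⟩ <;> rw [H.h_eq (by norm_num)] <;>
      simp [sum_range_succ, hf, Nat.choose]
  have h_high : h 5 = 252 ∧ h 6 = -28 ∧ h 7 = 57 ∧ h 8 = -3 ∧ h 9 = 2 := by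
    obtain ⟨h0, h1, h2, h3, h4⟩ := h_low
    have d0 := hDS 0 (by norm_num)
    have d1 := hDS 1 (by norm_num)
    have d2 := hDS 2 (by norm_num)
    have d3 := hDS 3 (by norm_num)
    have d4 := hDS 4 (by norm_num)
    norm_num [Nat.choose] at d0 d1 d2 d3 d4
    omega
  refine ⟨?_, ?_, ?_, ?_⟩ <;> rw [H.f_eq (by norm_num)] <;>
    simp [sum_range_succ, h_low, h_high, Nat.choose]
end

section
/- If a triangulation of a 2a-dimensional closed manifold has N = 3a+3 vertices and satisfies the duality property (a face of dimension a+j is in the triangulation iff its complementary face of dimension 2a-j+1 is not, for all j \ge 0), then every subset of at most a+1 vertices is a face (tightness). -/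
open Finset

/- Any set `T` of `a + 1` vertices has a complement of `2a + 2` vertices, too large to be a
face; duality then makes `T` a face, and a set of at most `a + 1` vertices lies in such a `T`. -/

theorem mem_of_mem_iff_compl_notMem {V : Type*} [Fintype V] [DecidableEq V]
    {Δ : Finset (Finset V)} {m : ℕ} (hdim : ∀ s ∈ Δ, s.card ≤ m) {S : Finset V}
    (hdual : S ∈ Δ ↔ Sᶜ ∉ Δ) (hS : m < Fintype.card V - S.card) : S ∈ Δ := by
  refine hdual.mpr fun hcompl => ?_
  have := hdim _ hcompl
  rw [card_compl] at this
  omega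

theorem duality_implies_tightness_general
    {V : Type*} [Fintype V] [DecidableEq V] (a : ℕ)
    (hV : Fintype.card V = 3 * a + 3)
    (Δ : Finset (Finset V))
    (hdown : ∀ s ∈ Δ, ∀ t : Finset V, t ⊆ s → t.Nonempty → t ∈ Δ)
    (hdim : ∀ s ∈ Δ, s.card ≤ 2 * a + 1)
    (hdual : ∀ S : Finset V, a + 1 ≤ S.card → (S ∈ Δ ↔ Sᶜ ∉ Δ)) :
    ∀ S : Finset V, S.Nonempty → S.card ≤ a + 1 → S ∈ Δ := by
  intro S hSne hScard
  obtain ⟨T, hST, hT⟩ := exists_superset_card_eq hScard (by omega : a + 1 ≤ Fintype.card V)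
  have hTΔ : T ∈ Δ :=
    mem_of_mem_iff_compl_notMem hdim (hdual T hT.ge) (by omega)
  exact hdown T hTΔ S hST hSne

/-- **Duality implies tightness.**  Let `Δ` be a simplicial complex on a vertex
set `V` with `|V| = 3a+3` whose faces have dimension at most `2a`
(cardinality at most `2a+1`).  If `Δ` satisfies duality — for every subset `S`
of cardinality `a+j+1` with `j ≥ 0`, `S` is a face iff its complement (of
dimension `2a-j+1`) is not a face — then every nonempty subset of at most
`a+1` vertices is a face of `Δ` (tightness). -/
theorem duality_implies_tightness
    {V : Type*} [Fintype V] [DecidableEq V] (a : ℕ) (ha : 1 ≤ a)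
    (hV : Fintype.card V = 3 * a + 3)
    (Δ : Finset (Finset V))
    (hdown : ∀ s ∈ Δ, ∀ t : Finset V, t ⊆ s → t.Nonempty → t ∈ Δ)
    (hdim : ∀ s ∈ Δ, s.card ≤ 2 * a + 1)
    (hdual : ∀ S : Finset V, a + 1 ≤ S.card → (S ∈ Δ ↔ Sᶜ ∉ Δ)) :
    ∀ S : Finset V, S.Nonempty → S.card ≤ a + 1 → S ∈ Δ :=
  duality_implies_tightness_general a hV Δ hdown hdim hdual
end

section
/- For a = 1 and all n \ge 2, the alternating sum \sum_{k=0}^{n} (-1)^k f_k^{1,n}, where f_k^{1,n} = (1/2) binom(n+k+2, k+1) binom(n+1, k+1), equals 1 if n is even and 0 if n is odd. -/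
/-!
Put `m = n + 1` and `j = k + 1`. Twice the sum is `1 - ∑_{j=0}^{m} (-1)^j C(m,j) C(m+j,m)`, and
the latter sum is `P_m(1)` for the shifted Legendre polynomial `P_m`. The symmetry
`P_m(1 - x) = (-1)^m P_m(x)` gives `P_m(1) = (-1)^m P_m(0) = (-1)^m`, so twice the sum is
`1 + (-1)^n`.
-/

open Finset Polynomial

theorem sum_range_neg_one_pow_mul_choose_mul_add_choose {R : Type*} [Ring R] (m : ℕ) :
    ∑ k ∈ range (m + 1), (-1 : R) ^ k * m.choose k * (m + k).choose m = (-1) ^ m := by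
  have h := shiftedLegendre_eval_symm m (1 : R)
  rw [sub_self, ← coeff_zero_eq_aeval_zero', coeff_shiftedLegendre] at h
  simpa [shiftedLegendre, aeval_def, eval₂_finsetSum] using h

theorem sum_range_neg_one_pow_mul_choose_succ_mul_add_choose {R : Type*} [Ring R] (m : ℕ) :
    ∑ k ∈ range m, (-1 : R) ^ k * m.choose (k + 1) * (m + (k + 1)).choose m = 1 - (-1) ^ m := by
  have h := sum_range_neg_one_pow_mul_choose_mul_add_choose (R := R) m
  rw [sum_range_succ', Nat.choose_zero_right, add_zero, Nat.choose_self] at h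
  simp only [pow_succ, mul_neg_one, neg_mul, sum_neg_distrib, pow_zero, Nat.cast_one,
    mul_one] at h
  rw [← h]
  abel

theorem alternating_sum_real_case_general (n : ℕ) :
    ∑ k ∈ Finset.range (n + 1),
        (-1 : ℚ) ^ k *
          ((Nat.choose (n + k + 2) (k + 1) : ℚ) * (Nat.choose (n + 1) (k + 1) : ℚ) / 2)
      = if Even n then 1 else 0 := by
  have key := sum_range_neg_one_pow_mul_choose_succ_mul_add_choose (R := ℚ) (n + 1)
  rw [pow_succ, mul_neg_one, sub_neg_eq_add] at key
  calc _ = (∑ k ∈ range (n + 1),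
          (-1 : ℚ) ^ k * (n + 1).choose (k + 1) * (n + 1 + (k + 1)).choose (n + 1)) / 2 := by
        rw [sum_div]
        refine sum_congr rfl fun k _ => ?_
        rw [Nat.choose_symm_add, show n + 1 + (k + 1) = n + k + 2 by omega]
        ring
    _ = (1 + (-1) ^ n) / 2 := by rw [key]
    _ = if Even n then 1 else 0 := by
        rcases Nat.even_or_odd n with h | h <;> simp [h.neg_one_pow, h, Nat.not_even_iff_odd]

/-- For `a = 1` and all `n ≥ 2`, the alternating sum
`∑_{k=0}^{n} (-1)^k f_k^{1,n}` with
`f_k^{1,n} = (1/2) * binom(n+k+2, k+1) * binom(n+1, k+1)`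
equals `1` if `n` is even and `0` if `n` is odd. -/
theorem alternating_sum_real_case (n : ℕ) (hn : 2 ≤ n) :
    ∑ k ∈ Finset.range (n + 1),
        (-1 : ℚ) ^ k *
          ((Nat.choose (n + k + 2) (k + 1) : ℚ) * (Nat.choose (n + 1) (k + 1) : ℚ) / 2)
      = if Even n then 1 else 0 :=
  alternating_sum_real_case_general n
end

section
/- For a = 2 and all n \ge 2, the alternating sum \sum_{k=0}^{2n} (-1)^k f_k^{2,n} equals n+1, where f_k^{2,n} = ((n+1)/(k+1))^2 \sum_{i+j=k} binom(n+i+1, i) binom(n, i) binom(n+j+1, j) binom(n, j). -/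
/-!
With `a i = C(n+i+1, i) C(n, i) = (n+i+1)! / ((n+1) i!² (n-i)!)`, which vanishes for `i > n`,
the alternating sum is `∑_{i,j ≤ n} (-1)^(i+j) (n+1)² a i a j / (i+j+1)²`, and every row sum
over `j` equals `1`, i.e. `∑_j (-1)^j a j / (i+j+1)² = (-1)^i / ((n+1)² a i)`.
This is Lagrange interpolation of `∏_{m ≠ i} (m - X)` at the nodes `-1, …, -(n+1)`, evaluated at
`X = i`: one factor `1 / (i+j+1)` comes from the barycentric formula, the other from the value
of the polynomial at the node `-(j+1)`.
-/

open Finset Polynomial Nat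

theorem Lagrange.eval_eq_eval_nodal_mul_sum {F ι : Type*} [Field F] [DecidableEq ι]
    {s : Finset ι} {v : ι → F} {f : F[X]} {x : F} (hvs : Set.InjOn v s) (hf : f.degree < #s)
    (hx : ∀ i ∈ s, x ≠ v i) :
    f.eval x = (nodal s v).eval x * ∑ i ∈ s, nodalWeight s v i * (x - v i)⁻¹ * f.eval (v i) :=
  (congrArg (eval x) (eq_interpolate hvs hf)).trans (eval_interpolate_not_at_node _ hx)

theorem prod_range_cast_sub_self {R : Type*} [CommRing R] (j : ℕ) :
    ∏ m ∈ range j, ((m : R) - j) = (-1) ^ j * j ! := by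
  induction j with
  | zero => simp
  | succ j ih =>
    rw [prod_range_succ']
    push_cast
    simp_rw [add_sub_add_right_eq_sub]
    rw [ih, factorial_succ]
    push_cast
    ring

theorem prod_range_erase_cast_sub {R : Type*} [CommRing R] {j n : ℕ} (hj : j ≤ n) :
    ∏ m ∈ (range (n + 1)).erase j, ((m : R) - j) = (-1) ^ j * j ! * (n - j)! := by
  induction n, hj using Nat.le_induction with
  | base => simp [range_add_one, prod_range_cast_sub_self]
  | succ n hjn ih =>
    rw [range_add_one, erase_insert_of_ne (by omega), prod_insert (by simp), ih,
      show n + 1 - j = n - j + 1 by omega, factorial_succ]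
    push_cast [Nat.cast_sub hjn]
    ring

theorem factorial_mul_prod_range_add_add_one {R : Type*} [CommSemiring R] (c N : ℕ) :
    (c ! : R) * ∏ m ∈ range N, ((c : R) + m + 1) = (c + N)! := by
  rw [← factorial_mul_ascFactorial, ascFactorial_eq_prod_range]
  push_cast
  simp_rw [add_right_comm]

theorem prod_range_erase_cast_sub_eq_mul_sum {i n : ℕ} (hi : i ≤ n) :
    ∏ m ∈ (range (n + 1)).erase i, ((m : ℚ) - i) =
      (∏ j ∈ range (n + 1), ((i : ℚ) + j + 1)) *
        ∑ j ∈ range (n + 1), (∏ m ∈ (range (n + 1)).erase j, ((m : ℚ) - j))⁻¹ *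
          ((i : ℚ) + j + 1)⁻¹ * ∏ m ∈ (range (n + 1)).erase i, ((m : ℚ) + j + 1) := by
  have hcard : #((range (n + 1)).erase i) = n := by simp [card_erase_of_mem, hi]
  have hflip (x : ℚ) : (-1) ^ n * ∏ m ∈ (range (n + 1)).erase i, (x - m) =
      ∏ m ∈ (range (n + 1)).erase i, ((m : ℚ) - x) := by
    have h := prod_neg (s := (range (n + 1)).erase i) (fun m : ℕ => x - m)
    rw [hcard] at h
    simp [← h]
  have hinj : Set.InjOn (fun j : ℕ => -((j : ℚ) + 1)) (range (n + 1)) :=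
    fun a _ b _ h => by simpa using h
  have key := Lagrange.eval_eq_eval_nodal_mul_sum
    (f := C ((-1) ^ n) * Lagrange.nodal ((range (n + 1)).erase i) (fun m : ℕ => (m : ℚ)))
    (x := (i : ℚ)) hinj
    (by rw [degree_C_mul (by simp), Lagrange.degree_nodal, hcard, card_range]
        exact_mod_cast n.lt_succ_self)
    (fun j _ => by rw [Ne, eq_neg_iff_add_eq_zero]; positivity)
  simp only [eval_mul, eval_C, Lagrange.eval_nodal, hflip, Lagrange.nodalWeight,
    neg_sub_neg, add_sub_add_right_eq_sub] at key
  simpa only [sub_neg_eq_add, ← add_assoc, prod_inv_distrib] using key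

def chooseMulChoose (n i : ℕ) : ℚ := (n + i + 1).choose i * n.choose i

theorem chooseMulChoose_mul_factorial {n i : ℕ} (hi : i ≤ n) :
    chooseMulChoose n i * ((n + 1) * i ! * i ! * (n - i)!) = (n + i + 1)! := by
  have h₁ := Nat.choose_mul_factorial_mul_factorial (show i ≤ n + i + 1 by omega)
  have h₂ := Nat.choose_mul_factorial_mul_factorial hi
  rw [show n + i + 1 - i = n + 1 by omega, factorial_succ] at h₁
  rw [chooseMulChoose, ← h₁, ← h₂]
  push_cast
  ring

theorem chooseMulChoose_eq {n i : ℕ} (hi : i ≤ n) :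
    chooseMulChoose n i = (n + i + 1)! / ((n + 1) * i ! * i ! * (n - i)!) := by
  rw [eq_div_iff (by positivity), chooseMulChoose_mul_factorial hi]

theorem sum_range_neg_one_pow_mul_chooseMulChoose_div_sq {n i : ℕ} (hi : i ≤ n) :
    ∑ j ∈ range (n + 1), (-1) ^ j * chooseMulChoose n j / ((i : ℚ) + j + 1) ^ 2 =
      (-1) ^ i / ((n + 1) ^ 2 * chooseMulChoose n i) := by
  have hterm : ∀ j ∈ range (n + 1),
      (∏ m ∈ (range (n + 1)).erase j, ((m : ℚ) - j))⁻¹ * ((i : ℚ) + j + 1)⁻¹ *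
        ∏ m ∈ (range (n + 1)).erase i, ((m : ℚ) + j + 1) =
      (n + 1) * ((-1) ^ j * chooseMulChoose n j / ((i : ℚ) + j + 1) ^ 2) := by
    intro j hj
    have hjn : j ≤ n := Nat.le_of_lt_succ (mem_range.1 hj)
    have hP : ∏ m ∈ (range (n + 1)).erase i, ((m : ℚ) + j + 1) =
        (n + j + 1)! / (((i : ℚ) + j + 1) * j !) := by
      rw [eq_div_iff (by positivity), ← mul_assoc,
        prod_erase_mul _ (fun m : ℕ => (m : ℚ) + j + 1) (mem_range.2 (by omega)), mul_comm,
        prod_congr rfl fun m _ => by rw [add_comm (m : ℚ)],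
        factorial_mul_prod_range_add_add_one, ← add_assoc, add_comm j n]
    rw [prod_range_erase_cast_sub hjn, hP, chooseMulChoose_eq hjn, mul_inv, mul_inv, ← inv_pow,
      inv_neg_one]
    field_simp
  have h := prod_range_erase_cast_sub_eq_mul_sum hi
  rw [prod_range_erase_cast_sub hi, sum_congr rfl hterm, ← mul_sum] at h
  have hN : ∏ j ∈ range (n + 1), ((i : ℚ) + j + 1) = (n + i + 1)! / i ! := by
    rw [eq_div_iff (by positivity), mul_comm, factorial_mul_prod_range_add_add_one,
      ← add_assoc, add_comm i n]
  rw [hN] at h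
  rw [chooseMulChoose_eq hi]
  field_simp at h ⊢
  exact h.symm

theorem sum_range_sum_antidiagonal_eq_sum_range_sum_range {M : Type*} [AddCommMonoid M] {n : ℕ}
    (f : ℕ → ℕ → M) (hf : ∀ i j, n < i ∨ n < j → f i j = 0) :
    ∑ k ∈ range (2 * n + 1), ∑ p ∈ antidiagonal k, f p.1 p.2 =
      ∑ i ∈ range (n + 1), ∑ j ∈ range (n + 1), f i j := by
  rw [← sum_product' (f := f), ← sum_fiberwise_of_maps_to (g := fun p : ℕ × ℕ => p.1 + p.2)
    (t := range (2 * n + 1)) (fun p hp => by simp only [mem_product, mem_range] at hp ⊢; omega)]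
  refine sum_congr rfl fun k _ => (sum_subset (fun p hp => ?_) fun p hp hp' => ?_).symm
  · exact HasAntidiagonal.mem_antidiagonal.2 (mem_filter.1 hp).2
  · apply hf
    simp only [HasAntidiagonal.mem_antidiagonal, mem_filter, mem_product, mem_range, not_and]
      at hp hp'
    omega

def alternatingSummand (n i j : ℕ) : ℚ :=
  (-1) ^ (i + j) * ((n + 1 : ℚ) / ((i + j : ℕ) + 1)) ^ 2 *
    (chooseMulChoose n i * chooseMulChoose n j)

theorem alternatingSummand_eq_zero {n i j : ℕ} (h : n < i ∨ n < j) :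
    alternatingSummand n i j = 0 := by
  rcases h with h | h <;> simp [alternatingSummand, chooseMulChoose, Nat.choose_eq_zero_of_lt h]

theorem sum_range_alternatingSummand {n i : ℕ} (hi : i ≤ n) :
    ∑ j ∈ range (n + 1), alternatingSummand n i j = 1 := by
  have ha : chooseMulChoose n i ≠ 0 := by
    rw [chooseMulChoose_eq hi]
    positivity
  calc ∑ j ∈ range (n + 1), alternatingSummand n i j
      = (-1) ^ i * (n + 1) ^ 2 * chooseMulChoose n i *
          ∑ j ∈ range (n + 1), (-1) ^ j * chooseMulChoose n j / ((i : ℚ) + j + 1) ^ 2 := by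
        rw [mul_sum]
        refine sum_congr rfl fun j _ => ?_
        rw [alternatingSummand, div_pow]
        push_cast
        ring
    _ = 1 := by
        rw [sum_range_neg_one_pow_mul_chooseMulChoose_div_sq hi]
        field_simp
        rw [pow_right_comm, neg_one_sq, one_pow]

theorem alternating_sum_complex_case_general (n : ℕ) :
    ∑ k ∈ Finset.range (2 * n + 1),
        (-1 : ℚ) ^ k * ((n + 1 : ℚ) / (k + 1)) ^ 2 *
          ∑ i ∈ Finset.range (k + 1),
            (Nat.choose (n + i + 1) i : ℚ) * (Nat.choose n i : ℚ) *
              (Nat.choose (n + (k - i) + 1) (k - i) : ℚ) * (Nat.choose n (k - i) : ℚ)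
      = (n : ℚ) + 1 := by
  calc _ = ∑ k ∈ range (2 * n + 1), ∑ p ∈ antidiagonal k, alternatingSummand n p.1 p.2 := by
        refine sum_congr rfl fun k _ => ?_
        rw [Nat.sum_antidiagonal_eq_sum_range_succ (alternatingSummand n), mul_sum]
        refine sum_congr rfl fun i hi => ?_
        rw [alternatingSummand, Nat.add_sub_cancel' (Nat.le_of_lt_succ (mem_range.1 hi)),
          chooseMulChoose, chooseMulChoose]
        ring
    _ = ∑ i ∈ range (n + 1), ∑ j ∈ range (n + 1), alternatingSummand n i j :=
        sum_range_sum_antidiagonal_eq_sum_range_sum_range _ fun _ _ => alternatingSummand_eq_zero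
    _ = ∑ i ∈ range (n + 1), 1 :=
        sum_congr rfl fun i hi => sum_range_alternatingSummand (Nat.le_of_lt_succ (mem_range.1 hi))
    _ = (n : ℚ) + 1 := by simp

/-- For `a = 2` and all `n ≥ 2`, the alternating sum
`∑_{k=0}^{2n} (-1)^k f_k^{2,n}` with
`f_k^{2,n} = ((n+1)/(k+1))² * ∑_{i+j=k} binom(n+i+1,i) binom(n,i) binom(n+j+1,j) binom(n,j)`
equals `n + 1`. -/
theorem alternating_sum_complex_case (n : ℕ) (hn : 2 ≤ n) :
    ∑ k ∈ Finset.range (2 * n + 1),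
        (-1 : ℚ) ^ k * ((n + 1 : ℚ) / (k + 1)) ^ 2 *
          ∑ i ∈ Finset.range (k + 1),
            (Nat.choose (n + i + 1) i : ℚ) * (Nat.choose n i : ℚ) *
              (Nat.choose (n + (k - i) + 1) (k - i) : ℚ) * (Nat.choose n (k - i) : ℚ)
      = (n : ℚ) + 1 :=
  alternating_sum_complex_case_general n
end

section
/- The quantity f_k^{1,n} = (1/2) binom(n+k+2, k+1) binom(n+1, k+1) is an integer for all integers n \ge 1 and 0 \le k \le n. -/
/-!
Choosing `b` out of `a + b` and then `b` out of `a` is the same as choosing `2b` out of `a + b`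
and splitting them into two halves, so `C(a+b, b) C(a, b) = C(a+b, 2b) C(2b, b)`; the central
binomial coefficient `C(2b, b)` is even for `b ≥ 1`.
-/

namespace Nat

theorem choose_add_mul_choose_eq_choose_mul_centralBinom (a b : ℕ) :
    (a + b).choose b * a.choose b = (a + b).choose (2 * b) * b.centralBinom := by
  rw [centralBinom_eq_two_mul_choose, choose_mul (by omega), Nat.add_sub_cancel,
    Nat.two_mul, Nat.add_sub_cancel]

theorem two_dvd_choose_add_mul_choose (a : ℕ) {b : ℕ} (hb : 0 < b) :
    2 ∣ (a + b).choose b * a.choose b := by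
  rw [choose_add_mul_choose_eq_choose_mul_centralBinom]
  exact Dvd.dvd.mul_left (two_dvd_centralBinom_of_one_le hb) _

end Nat

theorem f_real_is_integer_general (n k : ℕ) :
    2 ∣ Nat.choose (n + k + 2) (k + 1) * Nat.choose (n + 1) (k + 1) := by
  rw [show n + k + 2 = (n + 1) + (k + 1) by omega]
  exact Nat.two_dvd_choose_add_mul_choose (n + 1) k.succ_pos

/-- `f_k^{1,n} = (1/2) * binom(n+k+2, k+1) * binom(n+1, k+1)` is an integer for
all `n ≥ 1` and `0 ≤ k ≤ n`, i.e. the product of the two binomial coefficients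
is always even in this range. -/
theorem f_real_is_integer (n k : ℕ) (hn : 1 ≤ n) (hk : k ≤ n) :
    2 ∣ Nat.choose (n + k + 2) (k + 1) * Nat.choose (n + 1) (k + 1) :=
  f_real_is_integer_general n k
end
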